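/- arXiv:1607.06982 — 3 statements merged into one kernel-verified Lean document; each statement's English description precedes it below -/
import Mathlib

section
/- For n variables x = (x_1,...,x_n) and parameters a, the factorial complete homogeneous function satisfies h_m(x|a) = Σ over weakly increasing sequences 1 ≤ i_1 ≤ i_2 ≤ ... ≤ i_m ≤ n of the products (x_{i_1} + a_{i_1})·(x_{i_2} + a_{i_2+1})···(x_{i_m} + a_{i_m+m-1}). -/
open PowerSeries Finset

noncomputable section

/-- `geom x` is the formal power series `1/(1-tx) = ∑ xⁿ tⁿ`. -/
def geom {R : Type*} [CommRing R] (x : R) : PowerSeries R := PowerSeries.mk fun n => x ^ n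

/-- `lin a` is the formal power series `1 + t·a`. -/
def lin {R : Type*} [CommRing R] (a : R) : PowerSeries R :=
  1 + PowerSeries.C a * PowerSeries.X

/-- Factorial power `(x|a)^m = (x+a₁)(x+a₂)···(x+a_m)`. -/
def factPow {R : Type*} [CommRing R] (x : R) (a : ℕ → R) (m : ℕ) : R :=
  ∏ k ∈ Finset.range m, (x + a (k + 1))

/-!
Splitting the weakly increasing sequences `i₁ ≤ … ≤ i_{m+1} ≤ n+1` according to whether
`i_{m+1} = n+1` shows that the right-hand side `S(n, m)` satisfies
`S(n+1, m+1) = S(n, m+1) + (x_{n+1} + a_{n+m+1}) S(n+1, m)`.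
The coefficients of the generating function obey the same recursion: writing `B` for the product
over the first `n` variables and the first `m+n` parameters, the identity
`1/(1 - t x) = 1 + t x/(1 - t x)` gives
`[t^{m+1}] B (1 - t x)⁻¹ (1 + t a) = [t^{m+1}] B + (x + a) [t^m] B (1 - t x)⁻¹`.
The boundary values at `m = 0` and at `n = 0` agree as well.
-/

theorem Fin.monotone_snoc {α : Type*} [Preorder α] {m : ℕ} {g : Fin m → α} {x : α}
    (hg : Monotone g) (hx : ∀ i, g i ≤ x) : Monotone (Fin.snoc g x : Fin (m + 1) → α) := by
  intro p q hpq
  induction q using Fin.lastCases with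
  | last =>
    induction p using Fin.lastCases with
    | last => exact le_rfl
    | cast p => simpa using hx p
  | cast q =>
    induction p using Fin.lastCases with
    | last => exact absurd hpq (Fin.castSucc_lt_last q).not_ge
    | cast p => simpa using hg (Fin.castSucc_le_castSucc_iff.mp hpq)

theorem sum_monotone_last_eq_last {M : Type*} [AddCommMonoid M] (n m : ℕ)
    (F : (Fin (m + 1) → Fin (n + 1)) → M) :
    ∑ f ∈ univ.filter (fun f => Monotone f ∧ f (Fin.last m) = Fin.last n), F f =
      ∑ g ∈ univ.filter (Monotone : (Fin m → Fin (n + 1)) → Prop),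
        F (Fin.snoc g (Fin.last n)) := by
  symm
  refine sum_nbij (fun g => Fin.snoc g (Fin.last n)) ?_ ?_ ?_ (fun _ _ => rfl)
  · intro g hg
    simp only [mem_filter, mem_univ, true_and] at hg ⊢
    exact ⟨Fin.monotone_snoc hg (fun _ => Fin.le_last _), by simp⟩
  · intro g _ g' _ h
    simpa using congrArg Fin.init h
  · intro f hf
    simp only [coe_filter, mem_univ, true_and, Set.mem_ofPred_eq] at hf
    refine ⟨Fin.init f,
      mem_coe.2 (mem_filter.2 ⟨mem_univ _, hf.1.comp Fin.strictMono_castSucc.monotone⟩), ?_⟩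
    simp [← hf.2, Fin.snoc_init_self]

theorem sum_monotone_last_ne_last {M : Type*} [AddCommMonoid M] (n m : ℕ)
    (F : (Fin (m + 1) → Fin (n + 1)) → M) :
    ∑ f ∈ univ.filter (fun f => Monotone f ∧ ¬f (Fin.last m) = Fin.last n), F f =
      ∑ g ∈ univ.filter (Monotone : (Fin (m + 1) → Fin n) → Prop), F (Fin.castSucc ∘ g) := by
  symm
  refine sum_nbij (Fin.castSucc ∘ ·) ?_ ?_ ?_ (fun _ _ => rfl)
  · intro g hg
    simp only [mem_filter, mem_univ, true_and] at hg ⊢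
    exact ⟨Fin.strictMono_castSucc.monotone.comp hg, (Fin.castSucc_lt_last _).ne⟩
  · intro g _ g' _ h
    exact (Fin.castSucc_injective n).comp_left h
  · intro f hf
    simp only [coe_filter, mem_univ, true_and, Set.mem_ofPred_eq] at hf
    obtain ⟨hmono, hlast⟩ := hf
    have hne (j : Fin (m + 1)) : f j ≠ Fin.last n :=
      ((hmono (Fin.le_last j)).trans_lt (Fin.lt_last_iff_ne_last.2 hlast)).ne
    refine ⟨fun j => (f j).castPred (hne j), ?_, funext fun j => Fin.castSucc_castPred _ _⟩
    exact mem_coe.2 (mem_filter.2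
      ⟨mem_univ _, fun p q hpq => Fin.castPred_le_castPred_iff.2 (hmono hpq)⟩)

section MonotoneSum

variable {R : Type*} [CommRing R]

def monotoneSum (w : ℕ → ℕ → R) (n m : ℕ) : R :=
  ∑ f ∈ univ.filter (Monotone : (Fin m → Fin n) → Prop), ∏ j : Fin m, w j (f j)

variable (w : ℕ → ℕ → R)

theorem monotoneSum_zero_right (n : ℕ) : monotoneSum w n 0 = 1 := by
  simp [monotoneSum, filter_true_of_mem fun f _ => Subsingleton.monotone f]

theorem monotoneSum_zero_succ (m : ℕ) : monotoneSum w 0 (m + 1) = 0 := by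
  simp [monotoneSum]

theorem monotoneSum_succ_succ (n m : ℕ) :
    monotoneSum w (n + 1) (m + 1) =
      monotoneSum w n (m + 1) + w m n * monotoneSum w (n + 1) m := by
  rw [monotoneSum, ← sum_filter_add_sum_filter_not _ (fun f => f (Fin.last m) = Fin.last n),
    filter_filter, filter_filter, sum_monotone_last_eq_last, sum_monotone_last_ne_last, add_comm,
    monotoneSum, monotoneSum, mul_sum]
  congr 1
  refine sum_congr rfl fun g _ => ?_
  simp [Fin.prod_univ_castSucc, mul_comm]

end MonotoneSum

section GeneratingFunction

variable {R : Type*} [CommRing R]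

theorem geom_eq_one_add (x : R) : geom x = 1 + X * (C x * geom x) := by
  ext (_ | j) <;> simp [geom, coeff_succ_X_mul, pow_succ']

theorem constantCoeff_geom (x : R) : constantCoeff (geom x) = 1 := by
  simp [geom]

theorem constantCoeff_lin (a : R) : constantCoeff (lin a) = 1 := by
  simp [lin]

theorem coeff_succ_mul_lin (A : R⟦X⟧) (a : R) (j : ℕ) :
    coeff (j + 1) (A * lin a) = coeff (j + 1) A + a * coeff j A := by
  simp [lin, mul_add, mul_left_comm A]

theorem coeff_succ_mul_geom (A : R⟦X⟧) (x : R) (j : ℕ) :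
    coeff (j + 1) (A * geom x) = coeff (j + 1) A + x * coeff j (A * geom x) := by
  have h : A * geom x = A + X * (C x * (A * geom x)) := by
    conv_lhs => rw [geom_eq_one_add]
    ring
  conv_lhs => rw [h]
  simp [coeff_succ_X_mul]

theorem coeff_prod_lin_of_lt (b : ℕ → R) {N j : ℕ} (h : N < j) :
    coeff j (∏ k ∈ range N, lin (b k)) = 0 := by
  induction N generalizing j with
  | zero => simp [coeff_one, h.ne']
  | succ N ih =>
    obtain ⟨j, rfl⟩ := Nat.exists_eq_succ_of_ne_zero (by omega : j ≠ 0)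
    rw [prod_range_succ, coeff_succ_mul_lin, ih (by omega), ih (by omega), mul_zero, add_zero]

theorem coeff_succ_mul_geom_mul_lin (A : R⟦X⟧) (x a : R) (m : ℕ) :
    coeff (m + 1) (A * geom x * lin a) = coeff (m + 1) A + (x + a) * coeff m (A * geom x) := by
  rw [coeff_succ_mul_lin, coeff_succ_mul_geom]
  ring

theorem coeff_prod_geom_mul_prod_lin (x a : ℕ → R) (n m : ℕ) :
    coeff m ((∏ i ∈ Icc 1 n, geom (x i)) * ∏ k ∈ range (m + n - 1), lin (a (k + 1))) =
      monotoneSum (fun j i => x (i + 1) + a (i + 1 + j)) n m := by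
  induction n generalizing m with
  | zero =>
    cases m with
    | zero => simp [monotoneSum_zero_right]
    | succ m => simp [monotoneSum_zero_succ, coeff_prod_lin_of_lt]
  | succ n ih =>
    induction m with
    | zero =>
      simp [monotoneSum_zero_right, constantCoeff_geom, constantCoeff_lin]
    | succ m ihm =>
      have hsplit : (∏ i ∈ Icc 1 (n + 1), geom (x i)) *
            ∏ k ∈ range (m + 1 + (n + 1) - 1), lin (a (k + 1)) =
          (∏ i ∈ Icc 1 n, geom (x i)) * (∏ k ∈ range (m + n), lin (a (k + 1))) *
            geom (x (n + 1)) * lin (a (m + n + 1)) := by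
        rw [prod_Icc_succ_top (by omega), show m + 1 + (n + 1) - 1 = m + n + 1 by omega,
          prod_range_succ]
        ring
      have hm : (∏ i ∈ Icc 1 n, geom (x i)) * (∏ k ∈ range (m + n), lin (a (k + 1))) *
            geom (x (n + 1)) =
          (∏ i ∈ Icc 1 (n + 1), geom (x i)) * ∏ k ∈ range (m + (n + 1) - 1), lin (a (k + 1)) := by
        rw [prod_Icc_succ_top (by omega), show m + (n + 1) - 1 = m + n by omega]
        ring
      have hprev := ih (m + 1)
      rw [show m + 1 + n - 1 = m + n by omega] at hprev
      rw [hsplit, coeff_succ_mul_geom_mul_lin, hprev, hm, ihm, monotoneSum_succ_succ]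
      ring_nf

end GeneratingFunction

theorem stmt8_general {R : Type*} [CommRing R] (n m : ℕ) (x a : ℕ → R) :
    PowerSeries.coeff m ((∏ i ∈ Finset.Icc 1 n, geom (x i)) *
        ∏ k ∈ Finset.range (m + n - 1), lin (a (k + 1))) =
      ∑ f ∈ Finset.univ.filter (fun f : Fin m → Fin n => ∀ p q, p ≤ q → f p ≤ f q),
        ∏ j : Fin m, (x ((f j : ℕ) + 1) + a ((f j : ℕ) + 1 + (j : ℕ))) :=
  coeff_prod_geom_mul_prod_lin x a n m

/-- hₘ(x|a) = Σ over weakly increasing 1 ≤ i₁ ≤ … ≤ i_m ≤ n of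
(x_{i₁}+a_{i₁})(x_{i₂}+a_{i₂+1})···(x_{i_m}+a_{i_m+m-1}). -/
theorem stmt8 {R : Type*} [CommRing R] (n m : ℕ) (hn : 1 ≤ n) (x a : ℕ → R) :
    PowerSeries.coeff m ((∏ i ∈ Finset.Icc 1 n, geom (x i)) *
        ∏ k ∈ Finset.range (m + n - 1), lin (a (k + 1))) =
      ∑ f ∈ Finset.univ.filter (fun f : Fin m → Fin n => ∀ p q, p ≤ q → f p ≤ f q),
        ∏ j : Fin m, (x ((f j : ℕ) + 1) + a ((f j : ℕ) + 1 + (j : ℕ))) :=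
  stmt8_general n m x a
end
end

section
/- Recursion in the last y-variable: with q̃_m(u; v | a) as below, q̃_m(u; v|a) = q̃_m(u; v'|a) + (v_s − a_{m+r-s})·q̃_{m-1}(u; v'|a), where v' = (v_1,...,v_{s-1}). -/
/-! Both sides are coefficients of `P · (1 + t c)` for one and the same product `P`: on the left
`c = v_s` is split off the `v`-product, on the right `c = a_{m+r-s}` is split off the `a`-product.
Since `[tᵐ] P (1 + t c) = [tᵐ] P + c [tᵐ⁻¹] P`, the difference is `(v_s - a_{m+r-s}) [tᵐ⁻¹] P`. -/

open PowerSeries Finset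

noncomputable section

/-- Flagged factorial complete function h_m(x_p,…,x_q | a), zero for m < 0. -/
def hfun {R : Type*} [CommRing R] (x a : ℕ → R) (p q : ℕ) (m : ℤ) : R :=
  if m < 0 then 0 else
    PowerSeries.coeff m.toNat ((∏ ℓ ∈ Finset.Icc p q, geom (x ℓ)) *
      ∏ k ∈ Finset.range (m.toNat + q - p), lin (a (k + 1)))

theorem coeff_succ_mul_lin_s17 {R : Type*} [CommRing R] (F : PowerSeries R) (c : R) (n : ℕ) :
    coeff (n + 1) (F * lin c) = coeff (n + 1) F + c * coeff n F := by
  rw [lin, mul_add, mul_one, ← mul_assoc, map_add, mul_comm F, mul_assoc, coeff_C_mul,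
    coeff_succ_mul_X]

/-- Recursion for q̃ₘ(u;v|a) in the last v-variable:
q̃ₘ(u;v|a) = q̃ₘ(u;v'|a) + (v_s − a_{m+r-s})·q̃_{m-1}(u;v'|a). -/
theorem stmt17 {R : Type*} [CommRing R] (r s m : ℕ) (u v a : ℕ → R)
    (hm : 1 ≤ m) (hs : 1 ≤ s) (hrs : s + 1 ≤ m + r) :
    PowerSeries.coeff m ((∏ i ∈ Finset.Icc 1 r, geom (u i)) *
        (∏ j ∈ Finset.Icc 1 s, lin (v j)) *
        ∏ k ∈ Finset.range (m + r - s - 1), lin (a (k + 1))) =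
    PowerSeries.coeff m ((∏ i ∈ Finset.Icc 1 r, geom (u i)) *
        (∏ j ∈ Finset.Icc 1 (s - 1), lin (v j)) *
        ∏ k ∈ Finset.range (m + r - s), lin (a (k + 1))) +
    (v s - a (m + r - s)) * PowerSeries.coeff (m - 1)
      ((∏ i ∈ Finset.Icc 1 r, geom (u i)) * (∏ j ∈ Finset.Icc 1 (s - 1), lin (v j)) *
        ∏ k ∈ Finset.range (m + r - s - 1), lin (a (k + 1))) := by
  obtain ⟨s, rfl⟩ : ∃ s', s = s' + 1 := ⟨s - 1, by omega⟩
  obtain ⟨m, rfl⟩ : ∃ m', m = m' + 1 := ⟨m - 1, by omega⟩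
  obtain ⟨k, hk⟩ : ∃ k, m + 1 + r - (s + 1) = k + 1 := ⟨m + r - s - 1, by omega⟩
  simp only [hk, Nat.add_sub_cancel, prod_Icc_succ_top (Nat.le_add_left 1 s), prod_range_succ]
  rw [← mul_assoc, mul_right_comm, ← mul_assoc, coeff_succ_mul_lin_s17, coeff_succ_mul_lin_s17]
  ring
end
end

section
/- Symplectic combination identity: (x_i + y_i)·q̃_{m}(x^{(i)}, x̄^{(i)}; y^{(i+1)}, ȳ^{(i)} | a) + (x̄_i + ȳ_i)·q̃_{m}(x^{(i+1)}, x̄^{(i)}; y^{(i+1)}, ȳ^{(i+1)} | a) = (x_i + y_i + x̄_i + ȳ_i)·q^{sp}_{m}(x^{(i)}, x̄^{(i)}; y^{(i+1)}, ȳ^{(i+1)} | a), where q^{sp}_m(x^{(d)},x̄^{(d)};y^{(d+1)},ȳ^{(d+1)}|a) is the coefficient of t^m in [∏_{j=d+1}^n (1+t y_j)(1+t ȳ_j) · ∏_{k=1}^{m}(1+t a_k)] / [∏_{i=d}^n (1-t x_i)(1-t x̄_i)]. -/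
open PowerSeries Finset

noncomputable section

/-!
Let `F` be the series whose `t^m`-coefficient is `q^{sp}_m`. The first series on the left is
`(1 + t ȳᵢ) F`, and the second is `(1 - t xᵢ) F`, because dropping `xᵢ` from the `x`-variables
multiplies by `1 - t xᵢ`. Taking `t^m`-coefficients, the `t^{m-1}`-terms cancel since
`(xᵢ + yᵢ) ȳᵢ = xᵢ ȳᵢ + 1 = (x̄ᵢ + ȳᵢ) xᵢ`.
-/

lemma one_sub_C_mul_X_mul_geom {R : Type*} [CommRing R] (x : R) :
    (1 - C x * X) * geom x = 1 := by
  ext n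
  cases n with
  | zero => simp [geom]
  | succ k =>
    rw [sub_mul, one_mul, map_sub, mul_assoc, coeff_C_mul, coeff_succ_X_mul]
    simp [geom, pow_succ, mul_comm]

lemma mul_coeff_lin_mul_add_mul_coeff_one_sub_mul {R : Type*} [CommRing R] {a b c d : R}
    (h : c * b = d * a) (m : ℕ) (F : PowerSeries R) :
    c * coeff m (lin b * F) + d * coeff m ((1 - C a * X) * F) = (c + d) * coeff m F := by
  have hlin : lin b * F = F + C b * (X * F) := by rw [lin]; ring
  have hsub : (1 - C a * X) * F = F - C a * (X * F) := by ring
  rw [hlin, hsub, map_add, map_sub, coeff_C_mul, coeff_C_mul]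
  linear_combination coeff m (X * F) * h

lemma mul_coeff_lin_mul_geom_mul_add_mul_coeff {R : Type*} [CommRing R] {a b c d : R}
    (h : c * b = d * a) (m : ℕ) (G : PowerSeries R) :
    c * coeff m (lin b * (geom a * G)) + d * coeff m G = (c + d) * coeff m (geom a * G) := by
  simpa only [← mul_assoc (1 - C a * X), one_sub_C_mul_X_mul_geom, one_mul] using
    mul_coeff_lin_mul_add_mul_coeff_one_sub_mul h m (geom a * G)

theorem stmt18_general {R : Type*} [CommRing R] (n m i : ℕ) (hin : i ≤ n)
    (x xb y yb a : ℕ → R)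
    (hxinv : ∀ ℓ, x ℓ * xb ℓ = 1) (hyinv : ∀ ℓ, y ℓ * yb ℓ = 1) :
    (x i + y i) * PowerSeries.coeff m
        ((∏ ℓ ∈ Finset.Icc i n, geom (x ℓ)) * (∏ ℓ ∈ Finset.Icc i n, geom (xb ℓ)) *
          (∏ j ∈ Finset.Icc (i + 1) n, lin (y j)) * (∏ j ∈ Finset.Icc i n, lin (yb j)) *
          ∏ k ∈ Finset.range m, lin (a (k + 1))) +
    (xb i + yb i) * PowerSeries.coeff m
        ((∏ ℓ ∈ Finset.Icc (i + 1) n, geom (x ℓ)) * (∏ ℓ ∈ Finset.Icc i n, geom (xb ℓ)) *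
          (∏ j ∈ Finset.Icc (i + 1) n, lin (y j)) *
          (∏ j ∈ Finset.Icc (i + 1) n, lin (yb j)) *
          ∏ k ∈ Finset.range m, lin (a (k + 1))) =
    (x i + y i + xb i + yb i) * PowerSeries.coeff m
        ((∏ ℓ ∈ Finset.Icc i n, geom (x ℓ)) * (∏ ℓ ∈ Finset.Icc i n, geom (xb ℓ)) *
          (∏ j ∈ Finset.Icc (i + 1) n, lin (y j)) *
          (∏ j ∈ Finset.Icc (i + 1) n, lin (yb j)) *
          ∏ k ∈ Finset.range m, lin (a (k + 1))) := by
  have hi : i ∉ Icc (i + 1) n := by simp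
  rw [← insert_Icc_add_one_left_eq_Icc hin, prod_insert hi, prod_insert hi, prod_insert hi]
  have h := mul_coeff_lin_mul_geom_mul_add_mul_coeff
    (by linear_combination hyinv i - hxinv i : (x i + y i) * yb i = (xb i + yb i) * x i) m
    ((∏ ℓ ∈ Icc (i + 1) n, geom (x ℓ)) * (geom (xb i) * ∏ ℓ ∈ Icc (i + 1) n, geom (xb ℓ)) *
      (∏ j ∈ Icc (i + 1) n, lin (y j)) * (∏ j ∈ Icc (i + 1) n, lin (yb j)) *
      ∏ k ∈ range m, lin (a (k + 1)))
  linear_combination (norm := ring_nf) h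

/-- Symplectic combination identity relating q̃ₘ and q^{sp}ₘ. -/
theorem stmt18 {R : Type*} [CommRing R] (n m i : ℕ) (hi1 : 1 ≤ i) (hin : i ≤ n)
    (x xb y yb a : ℕ → R)
    (hxinv : ∀ ℓ, x ℓ * xb ℓ = 1) (hyinv : ∀ ℓ, y ℓ * yb ℓ = 1) :
    (x i + y i) * PowerSeries.coeff m
        ((∏ ℓ ∈ Finset.Icc i n, geom (x ℓ)) * (∏ ℓ ∈ Finset.Icc i n, geom (xb ℓ)) *
          (∏ j ∈ Finset.Icc (i + 1) n, lin (y j)) * (∏ j ∈ Finset.Icc i n, lin (yb j)) *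
          ∏ k ∈ Finset.range m, lin (a (k + 1))) +
    (xb i + yb i) * PowerSeries.coeff m
        ((∏ ℓ ∈ Finset.Icc (i + 1) n, geom (x ℓ)) * (∏ ℓ ∈ Finset.Icc i n, geom (xb ℓ)) *
          (∏ j ∈ Finset.Icc (i + 1) n, lin (y j)) *
          (∏ j ∈ Finset.Icc (i + 1) n, lin (yb j)) *
          ∏ k ∈ Finset.range m, lin (a (k + 1))) =
    (x i + y i + xb i + yb i) * PowerSeries.coeff m
        ((∏ ℓ ∈ Finset.Icc i n, geom (x ℓ)) * (∏ ℓ ∈ Finset.Icc i n, geom (xb ℓ)) *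
          (∏ j ∈ Finset.Icc (i + 1) n, lin (y j)) *
          (∏ j ∈ Finset.Icc (i + 1) n, lin (yb j)) *
          ∏ k ∈ Finset.range m, lin (a (k + 1))) :=
  stmt18_general n m i hin x xb y yb a hxinv hyinv
end
end
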